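/- Let n ≥ 1, t_out ≥ 1, let Σ be a deterministic symmetric positive semidefinite n×n matrix, and let E_out = (1/t_out)·√Σ X Xᵀ √Σ where the t_out columns of X are i.i.d. copies of a rotationally invariant random vector ξ in ℝⁿ with E[ξξᵀ] = Iₙ and E[‖ξ‖⁴] < ∞; set γ = E[‖ξ‖⁴]/(n(n+2)). Let V be a random n×n orthogonal matrix independent of X. Then E[τ(Diag(Vᵀ E_out V)²)] = ((t_out − 1)/t_out + 3γ/t_out) · E[τ(Diag(Vᵀ Σ V)²)]. -/

import Mathlib

open MeasureTheory ProbabilityTheory Matrix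

/-- Normalized trace `τ(A) = (1/n)·Tr(A)`. -/
noncomputable def tau (n : ℕ) (A : Matrix (Fin n) (Fin n) ℝ) : ℝ := (1 / (n : ℝ)) * A.trace

/-- `Diag(A)`: the diagonal matrix obtained from `A` by zeroing out off-diagonal entries. -/
def diagPart (n : ℕ) (A : Matrix (Fin n) (Fin n) ℝ) : Matrix (Fin n) (Fin n) ℝ :=
  Matrix.diagonal A.diag

/-- Matrices carry the product measurable structure. -/
instance matrixMeasurableSpace {m k α : Type*} [MeasurableSpace α] :
    MeasurableSpace (Matrix m k α) :=
  inferInstanceAs (MeasurableSpace (m → k → α))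

/-!
Conditioning on `V` (Tonelli, by independence) reduces the claim to a fixed matrix `v`. With
`w_j` the `j`-th column of `R v`, one has `(vᵀ E_out v)_jj = t⁻¹ ∑_s ⟨w_j, X_s⟩²` and
`(vᵀ Σ v)_jj = ‖w_j‖²`, and for i.i.d. columns `E (∑_s Z_s)² = t E Z² + t (t - 1) (E Z)²` with
`Z = ⟨w, ξ⟩²`. A Householder reflection taking `w` to `‖w‖ e_i` shows by rotation invariance that
`⟨w, ξ⟩` has the law of `‖w‖ ξ_i`, so `E ⟨w, ξ⟩² = ‖w‖²` and `E ⟨w, ξ⟩⁴ = ‖w‖⁴ E ξ_i⁴`.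
Polarising with `e_p ± e_q` gives `E ξ_p² ξ_q² = E ξ_i⁴ / 3` for `p ≠ q`, hence
`E ‖ξ‖⁴ = n (n + 2) E ξ_i⁴ / 3`, i.e. `E ξ_i⁴ = 3 γ`.
-/

instance Matrix.borelSpace {m k : Type*} [Countable m] [Countable k] :
    BorelSpace (Matrix m k ℝ) :=
  inferInstanceAs (BorelSpace (m → k → ℝ))

instance Matrix.secondCountableTopology {m k : Type*} [Countable m] [Countable k] :
    SecondCountableTopology (Matrix m k ℝ) :=
  inferInstanceAs (SecondCountableTopology (m → k → ℝ))

lemma dotProduct_self_nonneg {ι : Type*} [Fintype ι] (u : ι → ℝ) : 0 ≤ u ⬝ᵥ u :=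
  Finset.sum_nonneg fun j _ => mul_self_nonneg (u j)

lemma exists_orthogonal_vecMul_eq {ι : Type*} [Fintype ι] [DecidableEq ι] {u v : ι → ℝ}
    (h : u ⬝ᵥ u = v ⬝ᵥ v) : ∃ O : Matrix ι ι ℝ, Oᵀ * O = 1 ∧ u ᵥ* O = v := by
  set d := u - v
  by_cases hd0 : d ⬝ᵥ d = 0
  · obtain rfl : u = v := sub_eq_zero.1 (dotProduct_self_eq_zero.1 hd0)
    exact ⟨1, by simp, by simp⟩
  have hd : d ⬝ᵥ d = 2 * (u ⬝ᵥ d) := by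
    simp only [d, dotProduct_sub, sub_dotProduct, dotProduct_comm v u]; linarith
  refine ⟨1 - (2 / (d ⬝ᵥ d)) • vecMulVec d d, ?_, ?_⟩
  · have hP : vecMulVec d d * vecMulVec d d = (d ⬝ᵥ d) • vecMulVec d d := by
      rw [vecMulVec_mul_vecMulVec, vecMulVec_smul]
    have hc : 2 / (d ⬝ᵥ d) * (2 / (d ⬝ᵥ d)) * (d ⬝ᵥ d) = 2 * (2 / (d ⬝ᵥ d)) := by
      field_simp
    rw [transpose_sub, transpose_one, transpose_smul, transpose_vecMulVec]
    simp only [sub_mul, mul_sub, one_mul, mul_one, smul_mul_smul_comm, hP, smul_smul, hc]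
    module
  · rw [vecMul_sub, vecMul_one, vecMul_smul, vecMul_vecMulVec, smul_smul,
      div_mul_eq_mul_div, ← hd, div_self hd0, one_smul, sub_sub_cancel]

lemma integrable_dotProduct_pow_four {Ω ι : Type*} [MeasurableSpace Ω] {μ : Measure Ω}
    [Fintype ι] {ξ : Ω → ι → ℝ} (hξ : Measurable ξ)
    (hmom4 : Integrable (fun ω => (∑ i, ξ ω i ^ 2) ^ 2) μ) (u : ι → ℝ) :
    Integrable (fun ω => (u ⬝ᵥ ξ ω) ^ 4) μ := by
  refine (hmom4.const_mul ((∑ i, u i ^ 2) ^ 2)).mono' (by fun_prop) (ae_of_all _ fun ω => ?_)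
  have hCS : (u ⬝ᵥ ξ ω) ^ 2 ≤ (∑ i, u i ^ 2) * ∑ i, ξ ω i ^ 2 :=
    Finset.sum_mul_sq_le_sq_mul_sq _ _ _
  rw [Real.norm_eq_abs, abs_of_nonneg (by positivity), ← mul_pow, show 4 = 2 * 2 from rfl,
    pow_mul]
  exact pow_le_pow_left₀ (sq_nonneg _) hCS 2

def IsRotationInvariant {Ω ι : Type*} [MeasurableSpace Ω] [Fintype ι] [DecidableEq ι]
    (μ : Measure Ω) (ξ : Ω → ι → ℝ) : Prop :=
  ∀ O : Matrix ι ι ℝ, Oᵀ * O = 1 → μ.map (fun ω => O *ᵥ ξ ω) = μ.map ξ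

namespace IsRotationInvariant
variable {Ω ι : Type*} [MeasurableSpace Ω] {μ : Measure Ω} [Fintype ι] [DecidableEq ι]
  {ξ : Ω → ι → ℝ}

theorem integral_comp_dotProduct (h : IsRotationInvariant μ ξ) (hξ : Measurable ξ)
    {φ : ℝ → ℝ} (hφ : Measurable φ) {u v : ι → ℝ} (huv : u ⬝ᵥ u = v ⬝ᵥ v) :
    ∫ ω, φ (v ⬝ᵥ ξ ω) ∂μ = ∫ ω, φ (u ⬝ᵥ ξ ω) ∂μ := by
  obtain ⟨O, hO, rfl⟩ := exists_orthogonal_vecMul_eq huv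
  unfold IsRotationInvariant at h
  have hφu : Measurable fun x => φ (u ⬝ᵥ x) := by fun_prop
  simp_rw [← dotProduct_mulVec]
  rw [← integral_map (f := fun x => φ (u ⬝ᵥ x)) (by fun_prop) hφu.aestronglyMeasurable, h O hO,
    integral_map hξ.aemeasurable hφu.aestronglyMeasurable]

theorem integral_comp_dotProduct_eq_single (h : IsRotationInvariant μ ξ) (hξ : Measurable ξ)
    {φ : ℝ → ℝ} (hφ : Measurable φ) (u : ι → ℝ) (i : ι) :
    ∫ ω, φ (u ⬝ᵥ ξ ω) ∂μ = ∫ ω, φ (√(u ⬝ᵥ u) * ξ ω i) ∂μ := by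
  have hsingle : Pi.single i √(u ⬝ᵥ u) ⬝ᵥ Pi.single i √(u ⬝ᵥ u) = u ⬝ᵥ u := by
    rw [single_dotProduct, Pi.single_eq_same,
      Real.mul_self_sqrt (dotProduct_self_nonneg u)]
  simpa only [single_dotProduct] using (h.integral_comp_dotProduct hξ hφ hsingle.symm).symm

theorem integral_dotProduct_pow (h : IsRotationInvariant μ ξ) (hξ : Measurable ξ)
    (u : ι → ℝ) (i : ι) (k : ℕ) :
    ∫ ω, (u ⬝ᵥ ξ ω) ^ k ∂μ = √(u ⬝ᵥ u) ^ k * ∫ ω, ξ ω i ^ k ∂μ := by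
  have := h.integral_comp_dotProduct_eq_single hξ (by fun_prop : Measurable fun x : ℝ => x ^ k)
    u i
  simp only [mul_pow] at this
  rw [this, integral_const_mul]

theorem integral_dotProduct_sq (h : IsRotationInvariant μ ξ) (hξ : Measurable ξ)
    (u : ι → ℝ) (i : ι) :
    ∫ ω, (u ⬝ᵥ ξ ω) ^ 2 ∂μ = u ⬝ᵥ u * ∫ ω, ξ ω i ^ 2 ∂μ := by
  rw [h.integral_dotProduct_pow hξ u i,
    Real.sq_sqrt (dotProduct_self_nonneg u)]

theorem integral_dotProduct_pow_four (h : IsRotationInvariant μ ξ) (hξ : Measurable ξ)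
    (u : ι → ℝ) (i : ι) :
    ∫ ω, (u ⬝ᵥ ξ ω) ^ 4 ∂μ = (u ⬝ᵥ u) ^ 2 * ∫ ω, ξ ω i ^ 4 ∂μ := by
  rw [h.integral_dotProduct_pow hξ u i, show 4 = 2 * 2 from rfl, pow_mul,
    Real.sq_sqrt (dotProduct_self_nonneg u)]

theorem integral_sq_mul_sq (h : IsRotationInvariant μ ξ) (hξ : Measurable ξ)
    (hmom4 : Integrable (fun ω => (∑ i, ξ ω i ^ 2) ^ 2) μ) (i p q : ι) :
    ∫ ω, ξ ω p ^ 2 * ξ ω q ^ 2 ∂μ =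
      if p = q then ∫ ω, ξ ω i ^ 4 ∂μ else (∫ ω, ξ ω i ^ 4 ∂μ) / 3 := by
  have h4 := fun u => h.integral_dotProduct_pow_four hξ u i
  have hint := integrable_dotProduct_pow_four (μ := μ) hξ hmom4
  set e : ι → ι → ℝ := fun p => Pi.single p 1
  have he : ∀ p x, e p ⬝ᵥ x = x p := fun p x => single_one_dotProduct p x
  split_ifs with hpq
  · subst hpq
    simpa [← pow_add, he, e] using h4 (e p)
  have hpol : ∀ ω, ξ ω p ^ 2 * ξ ω q ^ 2 = (((e p + e q) ⬝ᵥ ξ ω) ^ 4 + ((e p - e q) ⬝ᵥ ξ ω) ^ 4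
      - 2 * (e p ⬝ᵥ ξ ω) ^ 4 - 2 * (e q ⬝ᵥ ξ ω) ^ 4) / 12 := by
    intro ω; simp only [add_dotProduct, sub_dotProduct, he]; ring
  simp_rw [hpol]
  rw [integral_div, integral_sub, integral_sub, integral_add, integral_const_mul,
    integral_const_mul, h4, h4, h4, h4]
  · simp [e, he, hpq, Ne.symm hpq, dotProduct_add, dotProduct_sub]
    ring
  all_goals fun_prop (disch := exact hint _)

theorem integral_sq_sum_sq (h : IsRotationInvariant μ ξ) (hξ : Measurable ξ)
    (hmom4 : Integrable (fun ω => (∑ i, ξ ω i ^ 2) ^ 2) μ) (i : ι) :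
    ∫ ω, (∑ p, ξ ω p ^ 2) ^ 2 ∂μ =
      Fintype.card ι * (Fintype.card ι + 2) / 3 * ∫ ω, ξ ω i ^ 4 ∂μ := by
  have hint : ∀ p q, Integrable (fun ω => ξ ω p ^ 2 * ξ ω q ^ 2) μ := by
    refine fun p q => hmom4.mono' (by fun_prop) (ae_of_all _ fun ω => ?_)
    have hle : ∀ p, ξ ω p ^ 2 ≤ ∑ j, ξ ω j ^ 2 := fun p =>
      Finset.single_le_sum (fun j _ => sq_nonneg (ξ ω j)) (Finset.mem_univ p)
    rw [Real.norm_eq_abs, abs_of_nonneg (by positivity), sq (∑ j, _)]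
    exact mul_le_mul (hle p) (hle q) (sq_nonneg _) (by positivity)
  have hexp : ∀ ω, (∑ p, ξ ω p ^ 2) ^ 2 = ∑ p, ∑ q, ξ ω p ^ 2 * ξ ω q ^ 2 := fun ω => by
    rw [sq, Finset.sum_mul_sum]
  have hval : ∀ p q, ∫ ω, ξ ω p ^ 2 * ξ ω q ^ 2 ∂μ
      = (∫ ω, ξ ω i ^ 4 ∂μ) / 3 + if p = q then 2 * (∫ ω, ξ ω i ^ 4 ∂μ) / 3 else 0 := by
    intro p q
    rw [h.integral_sq_mul_sq hξ hmom4 i]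
    split_ifs <;> ring
  simp_rw [hexp]
  rw [integral_finsetSum _ fun p _ => integrable_finsetSum _ fun q _ => hint p q]
  simp_rw [integral_finsetSum _ fun q _ => hint _ q, hval, Finset.sum_add_distrib,
    Finset.sum_ite_eq, Finset.mem_univ, if_true, Finset.sum_const, Finset.card_univ, nsmul_eq_mul]
  ring

theorem integral_dotProduct_pow_four_eq_integral_sq_sum_sq [Nonempty ι]
    (h : IsRotationInvariant μ ξ) (hξ : Measurable ξ)
    (hmom4 : Integrable (fun ω => (∑ i, ξ ω i ^ 2) ^ 2) μ) (u : ι → ℝ) :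
    ∫ ω, (u ⬝ᵥ ξ ω) ^ 4 ∂μ = 3 * ((∫ ω, (∑ i, ξ ω i ^ 2) ^ 2 ∂μ)
      / (Fintype.card ι * (Fintype.card ι + 2))) * (u ⬝ᵥ u) ^ 2 := by
  obtain ⟨i⟩ := ‹Nonempty ι›
  have hcard : (Fintype.card ι : ℝ) ≠ 0 := Nat.cast_ne_zero.2 Fintype.card_ne_zero
  rw [h.integral_dotProduct_pow_four hξ u i, h.integral_sq_sum_sq hξ hmom4 i]
  field_simp

end IsRotationInvariant

-- Tonelli on `law V ⊗ law Y`: nonnegativity makes both sides meaningful without any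
-- integrability of `fun ω => F (V ω) (Y ω)`.
theorem ProbabilityTheory.IndepFun.integral_comp_eq_integral_integral {Ω α β : Type*}
    [MeasurableSpace Ω] {μ : Measure Ω} [IsFiniteMeasure μ] [MeasurableSpace α]
    [MeasurableSpace β] {V : Ω → α} {Y : Ω → β} (hVY : IndepFun V Y μ) (hV : Measurable V)
    (hY : Measurable Y) {F : α → β → ℝ} (hF : Measurable (Function.uncurry F))
    (hF0 : ∀ v y, 0 ≤ F v y) (hFi : ∀ v, Integrable (fun ω => F v (Y ω)) μ) :
    ∫ ω, F (V ω) (Y ω) ∂μ = ∫ ω, ∫ ω', F (V ω) (Y ω') ∂μ ∂μ := by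
  have hlaw := (indepFun_iff_map_prod_eq_prod_map_map hV.aemeasurable hY.aemeasurable).1 hVY
  have hFr : Measurable fun z : α × β => ENNReal.ofReal (Function.uncurry F z) :=
    ENNReal.measurable_ofReal.comp hF
  have hfrozen : Measurable fun v => ∫ ω', F v (Y ω') ∂μ :=
    (hF.comp (measurable_fst.prodMk (hY.comp measurable_snd))).stronglyMeasurable
      |>.integral_prod_right' |>.measurable
  rw [integral_eq_lintegral_of_nonneg_ae (ae_of_all _ fun ω => hF0 _ _)
      (hF.comp (hV.prodMk hY)).aestronglyMeasurable,
    integral_eq_lintegral_of_nonneg_ae (ae_of_all _ fun ω => integral_nonneg fun _ => hF0 _ _)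
      (hfrozen.comp hV).aestronglyMeasurable]
  congr 1
  calc ∫⁻ ω, ENNReal.ofReal (F (V ω) (Y ω)) ∂μ
      = ∫⁻ z, ENNReal.ofReal (Function.uncurry F z) ∂(μ.map fun ω => (V ω, Y ω)) :=
        (lintegral_map hFr (hV.prodMk hY)).symm
    _ = ∫⁻ v, ∫⁻ y, ENNReal.ofReal (F v y) ∂(μ.map Y) ∂(μ.map V) := by
        rw [hlaw, lintegral_prod _ hFr.aemeasurable]; rfl
    _ = ∫⁻ ω, ∫⁻ ω', ENNReal.ofReal (F (V ω) (Y ω')) ∂μ ∂μ := by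
        rw [lintegral_map (f := fun v => ∫⁻ y, ENNReal.ofReal (F v y) ∂(μ.map Y))
          (by exact hFr.lintegral_prod_right') hV]
        refine lintegral_congr fun ω => lintegral_map ?_ hY
        exact ENNReal.measurable_ofReal.comp (hF.comp (measurable_const.prodMk measurable_id))
    _ = ∫⁻ ω, ENNReal.ofReal (∫ ω', F (V ω) (Y ω') ∂μ) ∂μ := by
        simp_rw [ofReal_integral_eq_lintegral_ofReal (hFi _) (ae_of_all _ fun _ => hF0 _ _)]

theorem integral_sq_sum_comp_of_iid {Ω E ι : Type*} [MeasurableSpace Ω] {μ : Measure Ω}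
    [IsProbabilityMeasure μ] [MeasurableSpace E] [Fintype ι] {Y : ι → Ω → E} {ξ : Ω → E}
    (hξ : Measurable ξ) (hY : iIndepFun Y μ) (hYξ : ∀ s, IdentDistrib (Y s) ξ μ μ)
    {g : E → ℝ} (hg : Measurable g) (hg2 : Integrable (fun ω => g (ξ ω) ^ 2) μ) :
    Integrable (fun ω => (∑ s, g (Y s ω)) ^ 2) μ ∧
      ∫ ω, (∑ s, g (Y s ω)) ^ 2 ∂μ = Fintype.card ι * ∫ ω, g (ξ ω) ^ 2 ∂μ
        + Fintype.card ι * (Fintype.card ι - 1) * (∫ ω, g (ξ ω) ∂μ) ^ 2 := by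
  classical
  have hg1 : Integrable (fun ω => g (ξ ω)) μ :=
    ((memLp_two_iff_integrable_sq (hg.comp hξ).aestronglyMeasurable).2 hg2).integrable one_le_two
  have hlin : ∀ s, IdentDistrib (fun ω => g (Y s ω)) (fun ω => g (ξ ω)) μ μ :=
    fun s => (hYξ s).comp hg
  have hsq : ∀ s, IdentDistrib (fun ω => g (Y s ω) ^ 2) (fun ω => g (ξ ω) ^ 2) μ μ :=
    fun s => (hYξ s).comp (hg.pow_const 2)
  have hpair : ∀ s s', Integrable (fun ω => g (Y s ω) * g (Y s' ω)) μ ∧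
      ∫ ω, g (Y s ω) * g (Y s' ω) ∂μ =
        (∫ ω, g (ξ ω) ∂μ) ^ 2 +
          if s = s' then ∫ ω, g (ξ ω) ^ 2 ∂μ - (∫ ω, g (ξ ω) ∂μ) ^ 2 else 0 := by
    intro s s'
    by_cases hss : s = s'
    · subst hss
      rw [if_pos rfl, add_sub_cancel]
      simp_rw [← pow_two]
      exact ⟨(hsq s).integrable_iff.2 hg2, (hsq s).integral_eq⟩
    · have hind : IndepFun (fun ω => g (Y s ω)) (fun ω => g (Y s' ω)) μ :=
        (hY.indepFun hss).comp hg hg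
      have hs := (hlin s).integrable_iff.2 hg1
      have hs' := (hlin s').integrable_iff.2 hg1
      refine ⟨hind.integrable_mul hs hs', ?_⟩
      rw [hind.integral_fun_mul_eq_mul_integral hs.1 hs'.1, (hlin s).integral_eq,
        (hlin s').integral_eq, if_neg hss, add_zero, sq]
  have hexp : ∀ ω, (∑ s, g (Y s ω)) ^ 2 = ∑ s, ∑ s', g (Y s ω) * g (Y s' ω) := fun ω => by
    rw [sq, Finset.sum_mul_sum]
  simp_rw [hexp]
  refine ⟨integrable_finsetSum _ fun s _ => integrable_finsetSum _ fun s' _ => (hpair s s').1, ?_⟩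
  rw [integral_finsetSum _ fun s _ => integrable_finsetSum _ fun s' _ => (hpair s s').1]
  simp_rw [integral_finsetSum _ fun s' _ => (hpair _ s').1, fun s s' => (hpair s s').2,
    Finset.sum_add_distrib, Finset.sum_ite_eq, Finset.mem_univ, if_true, Finset.sum_const,
    Finset.card_univ, nsmul_eq_mul]
  ring

lemma tau_diagPart_sq {n : ℕ} (A : Matrix (Fin n) (Fin n) ℝ) :
    tau n (diagPart n A ^ 2) = 1 / n * ∑ i, A i i ^ 2 := by
  simp [tau, diagPart, sq, diagonal_mul_diagonal, trace_diagonal]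

lemma transpose_mul_self_apply_self {m k R : Type*} [Fintype m] [CommSemiring R]
    (M : Matrix m k R) (j : k) : (Mᵀ * M) j j = Mᵀ j ⬝ᵥ Mᵀ j := rfl

lemma transpose_mul_mul_transpose_mul_apply_self {m k l R : Type*} [Fintype m] [Fintype l]
    [CommSemiring R] (M : Matrix m k R) (x : Matrix m l R) (j : k) :
    (Mᵀ * x * xᵀ * M) j j = ∑ s, (Mᵀ j ⬝ᵥ fun p => x p s) ^ 2 := by
  rw [show Mᵀ * x * xᵀ * M = (xᵀ * M)ᵀ * (xᵀ * M) by simp [transpose_mul, Matrix.mul_assoc],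
    transpose_mul_self_apply_self]
  simp only [dotProduct, transpose_apply, mul_apply, sq, mul_comm (x _ _)]

theorem integral_tau_diagPart_sq_sampleCov {Ω : Type*} [MeasurableSpace Ω] {μ : Measure Ω}
    [IsProbabilityMeasure μ] {n k t : ℕ} {ξ : Ω → Fin n → ℝ} (hξ : Measurable ξ)
    {X : Ω → Matrix (Fin n) (Fin t) ℝ} (hindep : iIndepFun (fun s ω => fun i => X ω i s) μ)
    (hident : ∀ s, IdentDistrib (fun ω => fun i => X ω i s) ξ μ μ) {γ : ℝ}
    (h2 : ∀ w, ∫ ω, (w ⬝ᵥ ξ ω) ^ 2 ∂μ = w ⬝ᵥ w)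
    (h4 : ∀ w, ∫ ω, (w ⬝ᵥ ξ ω) ^ 4 ∂μ = 3 * γ * (w ⬝ᵥ w) ^ 2)
    (h4i : ∀ w, Integrable (fun ω => (w ⬝ᵥ ξ ω) ^ 4) μ) (M : Matrix (Fin n) (Fin k) ℝ) :
    Integrable (fun ω => tau k (diagPart k ((t : ℝ)⁻¹ • (Mᵀ * X ω * (X ω)ᵀ * M)) ^ 2)) μ ∧
      ∫ ω, tau k (diagPart k ((t : ℝ)⁻¹ • (Mᵀ * X ω * (X ω)ᵀ * M)) ^ 2) ∂μ =
        (((t : ℝ) - 1) / t + 3 * γ / t) * tau k (diagPart k (Mᵀ * M) ^ 2) := by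
  have hcol : ∀ j, Integrable (fun ω => (∑ s, (Mᵀ j ⬝ᵥ fun p => X ω p s) ^ 2) ^ 2) μ ∧
      ∫ ω, (∑ s, (Mᵀ j ⬝ᵥ fun p => X ω p s) ^ 2) ^ 2 ∂μ
        = t * (3 * γ * (Mᵀ j ⬝ᵥ Mᵀ j) ^ 2) + t * (t - 1) * (Mᵀ j ⬝ᵥ Mᵀ j) ^ 2 := by
    intro j
    have hg2 : Integrable (fun ω => ((Mᵀ j ⬝ᵥ ξ ω) ^ 2) ^ 2) μ := by
      simpa only [← pow_mul] using h4i (Mᵀ j)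
    obtain ⟨hint, hval⟩ := integral_sq_sum_comp_of_iid (Y := fun s ω i => X ω i s) hξ hindep
      hident (by fun_prop : Measurable fun y => (Mᵀ j ⬝ᵥ y) ^ 2) hg2
    refine ⟨hint, ?_⟩
    rw [hval, h2]
    simp only [← pow_mul, h4, Fintype.card_fin]
  have hpt : ∀ ω, tau k (diagPart k ((t : ℝ)⁻¹ • (Mᵀ * X ω * (X ω)ᵀ * M)) ^ 2)
      = ∑ j, 1 / k * (t : ℝ)⁻¹ ^ 2 * (∑ s, (Mᵀ j ⬝ᵥ fun p => X ω p s) ^ 2) ^ 2 := by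
    intro ω
    rw [tau_diagPart_sq, Finset.mul_sum]
    refine Finset.sum_congr rfl fun j _ => ?_
    rw [Matrix.smul_apply, smul_eq_mul, transpose_mul_mul_transpose_mul_apply_self]
    ring
  simp_rw [hpt]
  refine ⟨integrable_finsetSum _ fun j _ => (hcol j).1.const_mul _, ?_⟩
  rw [integral_finsetSum _ fun j _ => (hcol j).1.const_mul _, tau_diagPart_sq, Finset.mul_sum,
    Finset.mul_sum]
  refine Finset.sum_congr rfl fun j _ => ?_
  rw [integral_const_mul, (hcol j).2, transpose_mul_self_apply_self]
  rcases eq_or_ne (t : ℝ) 0 with ht | ht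
  · simp [ht]
  · field_simp
    ring

lemma continuous_tau_diagPart_sq (n : ℕ) :
    Continuous fun A : Matrix (Fin n) (Fin n) ℝ => tau n (diagPart n A ^ 2) := by
  unfold tau diagPart
  fun_prop

theorem stmt_7_general {Ω : Type*} [MeasurableSpace Ω] (μ : Measure Ω) [IsProbabilityMeasure μ]
    (n tout : ℕ) (hn : 1 ≤ n)
    (S R : Matrix (Fin n) (Fin n) ℝ)
    (hR : R.PosSemidef) (hRS : R * R = S)
    (ξ : Ω → Fin n → ℝ) (hξmeas : Measurable ξ)
    (hrot : ∀ O : Matrix (Fin n) (Fin n) ℝ, Oᵀ * O = 1 →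
      Measure.map (fun ω => O.mulVec (ξ ω)) μ = Measure.map ξ μ)
    (hcov : ∀ i j : Fin n, ∫ ω, ξ ω i * ξ ω j ∂μ = if i = j then (1 : ℝ) else 0)
    (hmom4 : Integrable (fun ω => (∑ i, ξ ω i ^ 2) ^ 2) μ)
    (X : Ω → Matrix (Fin n) (Fin tout) ℝ) (hXmeas : Measurable X)
    (hindep : iIndepFun
      (fun t ω => fun i => X ω i t) μ)
    (hident : ∀ t : Fin tout, IdentDistrib (fun ω => fun i => X ω i t) ξ μ μ)
    (Eout : Ω → Matrix (Fin n) (Fin n) ℝ)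
    (hEout : ∀ ω, Eout ω = ((tout : ℝ)⁻¹) • (R * X ω * (X ω)ᵀ * R))
    (V : Ω → Matrix (Fin n) (Fin n) ℝ) (hVmeas : Measurable V)
    (hVX : IndepFun V X μ)
    (γ : ℝ) (hγ : γ = (∫ ω, (∑ i, ξ ω i ^ 2) ^ 2 ∂μ) / ((n : ℝ) * ((n : ℝ) + 2))) :
    ∫ ω, tau n ((diagPart n ((V ω)ᵀ * Eout ω * V ω)) ^ 2) ∂μ =
      (((tout : ℝ) - 1) / (tout : ℝ) + 3 * γ / (tout : ℝ)) *
        ∫ ω, tau n ((diagPart n ((V ω)ᵀ * S * V ω)) ^ 2) ∂μ := by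
  have hξrot : IsRotationInvariant μ ξ := hrot
  have hRT : Rᵀ = R := by simpa [conjTranspose_eq_transpose_of_trivial] using hR.isHermitian.eq
  have h2 (w : Fin n → ℝ) : ∫ ω, (w ⬝ᵥ ξ ω) ^ 2 ∂μ = w ⬝ᵥ w := by
    rw [hξrot.integral_dotProduct_sq hξmeas w ⟨0, hn⟩]
    simp [sq, hcov]
  have h4 (w : Fin n → ℝ) : ∫ ω, (w ⬝ᵥ ξ ω) ^ 4 ∂μ = 3 * γ * (w ⬝ᵥ w) ^ 2 := by
    have : Nonempty (Fin n) := ⟨⟨0, hn⟩⟩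
    rw [hγ, hξrot.integral_dotProduct_pow_four_eq_integral_sq_sum_sq hξmeas hmom4, Fintype.card_fin]
  have hfrozen (v : Matrix (Fin n) (Fin n) ℝ) := integral_tau_diagPart_sq_sampleCov hξmeas
    hindep hident h2 h4 (integrable_dotProduct_pow_four hξmeas hmom4) (R * v)
  have hconj (v : Matrix (Fin n) (Fin n) ℝ) (x : Matrix (Fin n) (Fin tout) ℝ) :
      vᵀ * ((tout : ℝ)⁻¹ • (R * x * xᵀ * R)) * v
        = (tout : ℝ)⁻¹ • ((R * v)ᵀ * x * xᵀ * (R * v)) := by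
    simp [transpose_mul, hRT, Matrix.mul_assoc]
  have hS (v : Matrix (Fin n) (Fin n) ℝ) : vᵀ * S * v = (R * v)ᵀ * (R * v) := by
    simp [← hRS, transpose_mul, hRT, Matrix.mul_assoc]
  simp_rw [hEout, hconj, hS]
  rw [hVX.integral_comp_eq_integral_integral hVmeas hXmeas (F := fun v x =>
      tau n (diagPart n ((tout : ℝ)⁻¹ • ((R * v)ᵀ * x * xᵀ * (R * v))) ^ 2))
      ?_ (fun v x => by rw [tau_diagPart_sq]; positivity) fun v => (hfrozen v).1]
  · simp_rw [(hfrozen _).2]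
    exact integral_const_mul _ _
  · exact ((continuous_tau_diagPart_sq n).comp (by fun_prop)).measurable

/-- For the test-set sample covariance `E_out = (1/t_out)·√Σ X Xᵀ √Σ` built from rotationally
invariant noise, and a random orthogonal matrix `V` independent of the test noise:
`E[τ(Diag(Vᵀ E_out V)²)] = ((t_out−1)/t_out + 3γ/t_out)·E[τ(Diag(Vᵀ Σ V)²)]`,
with `γ = E[‖ξ‖⁴]/(n(n+2))`. -/
theorem stmt_7 {Ω : Type*} [MeasurableSpace Ω] (μ : Measure Ω) [IsProbabilityMeasure μ]
    (n tout : ℕ) (hn : 1 ≤ n) (htout : 1 ≤ tout)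
    (S R : Matrix (Fin n) (Fin n) ℝ)
    (hS : S.PosSemidef) (hR : R.PosSemidef) (hRS : R * R = S)
    (ξ : Ω → Fin n → ℝ) (hξmeas : Measurable ξ)
    (hrot : ∀ O : Matrix (Fin n) (Fin n) ℝ, Oᵀ * O = 1 →
      Measure.map (fun ω => O.mulVec (ξ ω)) μ = Measure.map ξ μ)
    (hcov : ∀ i j : Fin n, ∫ ω, ξ ω i * ξ ω j ∂μ = if i = j then (1 : ℝ) else 0)
    (hmom4 : Integrable (fun ω => (∑ i, ξ ω i ^ 2) ^ 2) μ)
    (X : Ω → Matrix (Fin n) (Fin tout) ℝ) (hXmeas : Measurable X)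
    (hindep : iIndepFun
      (fun t ω => fun i => X ω i t) μ)
    (hident : ∀ t : Fin tout, IdentDistrib (fun ω => fun i => X ω i t) ξ μ μ)
    (Eout : Ω → Matrix (Fin n) (Fin n) ℝ)
    (hEout : ∀ ω, Eout ω = ((tout : ℝ)⁻¹) • (R * X ω * (X ω)ᵀ * R))
    (V : Ω → Matrix (Fin n) (Fin n) ℝ) (hVmeas : Measurable V)
    (hVorth : ∀ ω, (V ω)ᵀ * V ω = 1)
    (hVX : IndepFun V X μ)
    (γ : ℝ) (hγ : γ = (∫ ω, (∑ i, ξ ω i ^ 2) ^ 2 ∂μ) / ((n : ℝ) * ((n : ℝ) + 2))) :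
    ∫ ω, tau n ((diagPart n ((V ω)ᵀ * Eout ω * V ω)) ^ 2) ∂μ =
      (((tout : ℝ) - 1) / (tout : ℝ) + 3 * γ / (tout : ℝ)) *
        ∫ ω, tau n ((diagPart n ((V ω)ᵀ * S * V ω)) ^ 2) ∂μ :=
  stmt_7_general μ n tout hn S R hR hRS ξ hξmeas hrot hcov hmom4 X hXmeas hindep hident Eout hEout V
    hVmeas hVX γ hγ
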